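/- arXiv:2007.10939 — 2 statements merged into one kernel-verified Lean document; each statement's English description precedes it below -/
import Mathlib

section
/- Let (A,·,1,B) be a unital symmetric Frobenius algebra and r ∈ A⊗A with P_r(x) = r♯((φ♯)⁻¹(x)) and P_r^t(x) = r^{t♯}((φ♯)⁻¹(x)). Then r is a solution of the associative Yang-Baxter equation r₁₂r₁₃ + r₁₃r₂₃ − r₂₃r₁₂ = 0 if and only if (A, P_r, −P_r^t) is a Rota-Baxter system, i.e. P_r(x)P_r(y) = P_r(P_r(x)y + x(−P_r^t)(y)) and (−P_r^t)(x)(−P_r^t)(y) = (−P_r^t)(P_r(x)y + x(−P_r^t)(y)) for all x,y. -/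
/-!
Write `P x = r♯(B x)` and `S x = -r^{t♯}(B x)`. Evaluating the AYBE tensor
`r₁₂r₁₃ + r₁₃r₂₃ - r₂₃r₁₂` against `B x ⊗ B y` on its first two legs gives the Rota-Baxter
defect `P x P y - P (P x y + x S y)`, and against `B x ⊗ B y` on its last two legs gives
`S x S y - S (P x y + x S y)`: invariance and symmetry of `B` move the products of the evaluated
legs onto the arguments. Conversely, by nondegeneracy and finite dimensionality every functional
is some `B x`, so a tensor whose evaluations on the first two legs all vanish is zero; thus
already the first Rota-Baxter identity forces the AYBE.
-/

open TensorProduct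

noncomputable def t12 (k A : Type*) [Field k] [Ring A] [Algebra k A]
    (r : A ⊗[k] A) : A ⊗[k] (A ⊗[k] A) :=
  LinearMap.lTensor A ((TensorProduct.mk k A A).flip 1) r

noncomputable def t13 (k A : Type*) [Field k] [Ring A] [Algebra k A]
    (r : A ⊗[k] A) : A ⊗[k] (A ⊗[k] A) :=
  LinearMap.lTensor A (TensorProduct.mk k A A 1) r

noncomputable def t23 (k A : Type*) [Field k] [Ring A] [Algebra k A]
    (r : A ⊗[k] A) : A ⊗[k] (A ⊗[k] A) :=
  (1 : A) ⊗ₜ[k] r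

/-- The μ-nonhomogeneous associative Yang-Baxter equation
`r₁₂r₁₃ + r₁₃r₂₃ − r₂₃r₁₂ = μ r₁₃` in `A ⊗ A ⊗ A`. -/
noncomputable def nhacYBE (k A : Type*) [Field k] [Ring A] [Algebra k A]
    (μ : k) (r : A ⊗[k] A) : Prop :=
  t12 k A r * t13 k A r + t13 k A r * t23 k A r - t23 k A r * t12 k A r
    = μ • t13 k A r

/-- A tensor `s ∈ A ⊗ A` is invariant if `(id ⊗ L(x) − R(x) ⊗ id) s = 0` for all `x`. -/
def tinv (k A : Type*) [Field k] [Ring A] [Algebra k A]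
    (s : A ⊗[k] A) : Prop :=
  ∀ x : A,
    LinearMap.lTensor A (LinearMap.mulLeft k x) s
      - LinearMap.rTensor A (LinearMap.mulRight k x) s = 0

/-- `r♯ : A* → A`, `⟨r♯(a*), b*⟩ = ⟨r, a* ⊗ b*⟩`. -/
noncomputable def rsharp (k A : Type*) [Field k] [Ring A] [Algebra k A]
    (r : A ⊗[k] A) (f : Module.Dual k A) : A :=
  TensorProduct.lid k A (LinearMap.rTensor A f r)

/-- `r^{t♯} : A* → A`, `⟨r^{t♯}(a*), b*⟩ = ⟨r, b* ⊗ a*⟩`. -/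
noncomputable def rtsharp (k A : Type*) [Field k] [Ring A] [Algebra k A]
    (r : A ⊗[k] A) (f : Module.Dual k A) : A :=
  TensorProduct.rid k A (LinearMap.lTensor A f r)

/-- `L*(x) : A* → A*`, `⟨a* L*(x), b⟩ = ⟨a*, x b⟩`. -/
noncomputable def Lstar (k A : Type*) [Field k] [Ring A] [Algebra k A]
    (x : A) : Module.Dual k A →ₗ[k] Module.Dual k A :=
  (LinearMap.mulLeft k x).dualMap

/-- `R*(x) : A* → A*`, `⟨R*(x) a*, b⟩ = ⟨a*, b x⟩`. -/
noncomputable def Rstar (k A : Type*) [Field k] [Ring A] [Algebra k A]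
    (x : A) : Module.Dual k A →ₗ[k] Module.Dual k A :=
  (LinearMap.mulRight k x).dualMap

section Contraction

variable {R M N : Type*} [CommRing R] [AddCommGroup M] [Module R M] [AddCommGroup N] [Module R N]

noncomputable def evalLeft : Module.Dual R M →ₗ[R] M ⊗[R] N →ₗ[R] N :=
  LinearMap.llcomp R _ _ _ (TensorProduct.lid R N).toLinearMap ∘ₗ LinearMap.rTensorHom N

noncomputable def evalRight : Module.Dual R M →ₗ[R] N ⊗[R] M →ₗ[R] N :=
  LinearMap.llcomp R _ _ _ (TensorProduct.rid R N).toLinearMap ∘ₗ LinearMap.lTensorHom N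

@[simp] lemma evalLeft_tmul (f : Module.Dual R M) (m : M) (n : N) :
    evalLeft f (m ⊗ₜ[R] n) = f m • n := by
  simp [evalLeft]

@[simp] lemma evalRight_tmul (f : Module.Dual R M) (n : N) (m : M) :
    evalRight f (n ⊗ₜ[R] m) = f m • n := by
  simp [evalRight]

lemma eq_zero_of_forall_evalLeft_eq_zero [Module.Free R M] {x : M ⊗[R] N}
    (h : ∀ f : Module.Dual R M, evalLeft f x = 0) : x = 0 := by
  let b := Module.Free.chooseBasis R M
  apply (equivFinsuppOfBasisLeft b).injective
  ext i
  rw [equivFinsuppOfBasisLeft_apply, map_zero, Finsupp.zero_apply]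
  exact h (b.coord i)

noncomputable def contract12 (f g : Module.Dual R M) : M ⊗[R] (M ⊗[R] N) →ₗ[R] N :=
  evalLeft g ∘ₗ evalLeft f

noncomputable def contract23 (f g : Module.Dual R M) : N ⊗[R] (M ⊗[R] M) →ₗ[R] N :=
  evalRight f ∘ₗ (evalRight g).lTensor N

@[simp] lemma contract12_tmul (f g : Module.Dual R M) (a b : M) (c : N) :
    contract12 f g (a ⊗ₜ[R] (b ⊗ₜ[R] c)) = (f a * g b) • c := by
  simp [contract12, smul_smul]

@[simp] lemma contract23_tmul (f g : Module.Dual R M) (a : N) (b c : M) :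
    contract23 f g (a ⊗ₜ[R] (b ⊗ₜ[R] c)) = (f b * g c) • a := by
  simp [contract23, smul_smul, mul_comm]

end Contraction

lemma LinearMap.SeparatingLeft.surjective {K V : Type*} [Field K] [AddCommGroup V] [Module K V]
    [FiniteDimensional K V] {B : V →ₗ[K] V →ₗ[K] K} (hB : B.SeparatingLeft) :
    Function.Surjective B :=
  (LinearMap.injective_iff_surjective_of_finrank_eq_finrank Subspace.dual_finrank_eq.symm).mp
    (LinearMap.ker_eq_bot.mp (LinearMap.separatingLeft_iff_ker_eq_bot.mp hB))

lemma eq_zero_of_forall_contract12_eq_zero {K V N : Type*} [Field K] [AddCommGroup V]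
    [Module K V] [FiniteDimensional K V] [AddCommGroup N] [Module K N]
    {B : V →ₗ[K] V →ₗ[K] K} (hB : B.SeparatingLeft) {T : V ⊗[K] (V ⊗[K] N)}
    (h : ∀ x y, contract12 (B x) (B y) T = 0) : T = 0 := by
  refine eq_zero_of_forall_evalLeft_eq_zero fun f => ?_
  obtain ⟨x, rfl⟩ := hB.surjective f
  refine eq_zero_of_forall_evalLeft_eq_zero fun g => ?_
  obtain ⟨y, rfl⟩ := hB.surjective g
  exact h x y

section AssociativeYangBaxter

variable {k A : Type*} [Field k] [Ring A] [Algebra k A]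

lemma rsharp_eq_evalLeft (r : A ⊗[k] A) (f : Module.Dual k A) : rsharp k A r f = evalLeft f r :=
  rfl

lemma rtsharp_eq_evalRight (r : A ⊗[k] A) (f : Module.Dual k A) :
    rtsharp k A r f = evalRight f r :=
  rfl

@[simp] lemma t12_tmul (u v : A) : t12 k A (u ⊗ₜ[k] v) = u ⊗ₜ[k] (v ⊗ₜ[k] (1 : A)) := by
  simp [t12]

@[simp] lemma t13_tmul (u v : A) : t13 k A (u ⊗ₜ[k] v) = u ⊗ₜ[k] ((1 : A) ⊗ₜ[k] v) := by
  simp [t13]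

@[simp] lemma t12_add (s t : A ⊗[k] A) : t12 k A (s + t) = t12 k A s + t12 k A t :=
  map_add _ s t

@[simp] lemma t13_add (s t : A ⊗[k] A) : t13 k A (s + t) = t13 k A s + t13 k A t :=
  map_add _ s t

@[simp] lemma t23_add (s t : A ⊗[k] A) : t23 k A (s + t) = t23 k A s + t23 k A t :=
  tmul_add _ s t

@[simp] lemma t12_zero : t12 k A 0 = 0 := map_zero _
@[simp] lemma t13_zero : t13 k A 0 = 0 := map_zero _
@[simp] lemma t23_zero : t23 k A 0 = 0 := tmul_zero _ _

noncomputable def aybe (r : A ⊗[k] A) : A ⊗[k] (A ⊗[k] A) :=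
  t12 k A r * t13 k A r + t13 k A r * t23 k A r - t23 k A r * t12 k A r

lemma nhacYBE_zero_iff (r : A ⊗[k] A) : nhacYBE k A 0 r ↔ aybe r = 0 := by
  rw [nhacYBE, zero_smul, aybe]

variable (B : A →ₗ[k] A →ₗ[k] k)

lemma contract12_t13_mul_t23 (x y : A) (r r' : A ⊗[k] A) :
    contract12 (B x) (B y) (t13 k A r * t23 k A r') = evalLeft (B x) r * evalLeft (B y) r' := by
  induction r using TensorProduct.induction_on with
  | zero => simp
  | add s t hs ht => simp only [t13_add, add_mul, map_add, hs, ht]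
  | tmul u v =>
    induction r' using TensorProduct.induction_on with
    | zero => simp
    | add s t hs ht => simp only [t23_add, mul_add, map_add, hs, ht]
    | tmul u' v' => simp [t23, smul_smul, mul_comm]

lemma contract23_t12_mul_t13 (x y : A) (r r' : A ⊗[k] A) :
    contract23 (B x) (B y) (t12 k A r * t13 k A r') = evalRight (B x) r * evalRight (B y) r' := by
  induction r using TensorProduct.induction_on with
  | zero => simp
  | add s t hs ht => simp only [t12_add, add_mul, map_add, hs, ht]
  | tmul u v =>
    induction r' using TensorProduct.induction_on with
    | zero => simp
    | add s t hs ht => simp only [t13_add, mul_add, map_add, hs, ht]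
    | tmul u' v' => simp [smul_smul, mul_comm]

variable (hinvB : ∀ x y z : A, B (x * y) z = B x (y * z))
include hinvB

lemma contract12_t12_mul_t13 (x y : A) (r r' : A ⊗[k] A) :
    contract12 (B x) (B y) (t12 k A r * t13 k A r') =
      evalLeft (B (x * evalRight (B y) r)) r' := by
  induction r using TensorProduct.induction_on with
  | zero => simp
  | add s t hs ht => simp only [t12_add, add_mul, map_add, mul_add, LinearMap.add_apply, hs, ht]
  | tmul u v =>
    induction r' using TensorProduct.induction_on with
    | zero => simp
    | add s t hs ht => simp only [t13_add, mul_add, map_add, hs, ht]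
    | tmul u' v' => simp [hinvB, smul_smul, mul_comm]

lemma contract23_t23_mul_t12 (x y : A) (r r' : A ⊗[k] A) :
    contract23 (B x) (B y) (t23 k A r * t12 k A r') =
      evalRight (B (x * evalRight (B y) r)) r' := by
  induction r using TensorProduct.induction_on with
  | zero => simp
  | add s t hs ht =>
    simp only [t23_add, add_mul, map_add, mul_add, LinearMap.add_apply, hs, ht]
  | tmul u v =>
    induction r' using TensorProduct.induction_on with
    | zero => simp
    | add s t hs ht => simp only [t12_add, mul_add, map_add, hs, ht]
    | tmul u' v' => simp [t23, hinvB, smul_smul, mul_comm]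

variable (hsymm : ∀ x y : A, B x y = B y x)
include hsymm

lemma contract12_t23_mul_t12 (x y : A) (r r' : A ⊗[k] A) :
    contract12 (B x) (B y) (t23 k A r * t12 k A r') =
      evalLeft (B (evalLeft (B x) r' * y)) r := by
  induction r using TensorProduct.induction_on with
  | zero => simp
  | add s t hs ht => simp only [t23_add, add_mul, map_add, hs, ht]
  | tmul u v =>
    induction r' using TensorProduct.induction_on with
    | zero => simp
    | add s t hs ht =>
      simp only [t12_add, mul_add, map_add, add_mul, LinearMap.add_apply, hs, ht]
    | tmul u' v' => simp [t23, hinvB, hsymm v' (y * u), smul_smul]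

lemma contract23_t13_mul_t23 (x y : A) (r r' : A ⊗[k] A) :
    contract23 (B x) (B y) (t13 k A r * t23 k A r') =
      evalRight (B (evalLeft (B x) r' * y)) r := by
  induction r using TensorProduct.induction_on with
  | zero => simp
  | add s t hs ht => simp only [t13_add, add_mul, map_add, hs, ht]
  | tmul u v =>
    induction r' using TensorProduct.induction_on with
    | zero => simp
    | add s t hs ht =>
      simp only [t23_add, mul_add, map_add, add_mul, LinearMap.add_apply, hs, ht]
    | tmul u' v' => simp [t23, hinvB, hsymm v' (y * v), smul_smul]

lemma contract12_aybe (r : A ⊗[k] A) (x y : A) :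
    contract12 (B x) (B y) (aybe r) =
      evalLeft (B x) r * evalLeft (B y) r -
        evalLeft (B (evalLeft (B x) r * y + x * -evalRight (B y) r)) r := by
  rw [aybe, map_sub, map_add, contract12_t12_mul_t13 B hinvB, contract12_t13_mul_t23,
    contract12_t23_mul_t12 B hinvB hsymm, mul_neg, map_add, map_neg, map_add, map_neg,
    LinearMap.add_apply, LinearMap.neg_apply]
  abel

lemma contract23_aybe (r : A ⊗[k] A) (x y : A) :
    contract23 (B x) (B y) (aybe r) =
      -evalRight (B x) r * -evalRight (B y) r -
        -evalRight (B (evalLeft (B x) r * y + x * -evalRight (B y) r)) r := by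
  rw [aybe, map_sub, map_add, contract23_t12_mul_t13, contract23_t13_mul_t23 B hinvB hsymm,
    contract23_t23_mul_t12 B hinvB, neg_mul_neg, mul_neg, map_add, map_neg, map_add, map_neg,
    LinearMap.add_apply, LinearMap.neg_apply]
  abel

end AssociativeYangBaxter

theorem stmt8 (k A : Type*) [Field k] [Ring A] [Algebra k A]
    [FiniteDimensional k A]
    (B : A →ₗ[k] A →ₗ[k] k)
    (hsymm : ∀ x y : A, B x y = B y x)
    (hinvB : ∀ x y z : A, B (x * y) z = B x (y * z))
    (hnd : ∀ x : A, (∀ y : A, B x y = 0) → x = 0)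
    (r : A ⊗[k] A) :
    nhacYBE k A (0 : k) r ↔
      (let Pr : A → A := fun x => rsharp k A r (B x)
       let S : A → A := fun x => -(rtsharp k A r (B x))
       (∀ x y : A, Pr x * Pr y = Pr (Pr x * y + x * S y)) ∧
       (∀ x y : A, S x * S y = S (Pr x * y + x * S y))) := by
  simp only [nhacYBE_zero_iff, rsharp_eq_evalLeft, rtsharp_eq_evalRight]
  refine ⟨fun h => ⟨fun x y => ?_, fun x y => ?_⟩, fun h => ?_⟩
  · rw [← sub_eq_zero, ← contract12_aybe B hinvB hsymm, h, map_zero]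
  · rw [← sub_eq_zero, ← contract23_aybe B hinvB hsymm, h, map_zero]
  · refine eq_zero_of_forall_contract12_eq_zero hnd fun x y => ?_
    rw [contract12_aybe B hinvB hsymm, sub_eq_zero]
    exact h.1 x y
end

section
/- Let (A,·,1) be a unital associative algebra, s ∈ A⊗A symmetric and invariant, and P: A → A a Rota-Baxter operator of weight λ satisfying s♯P*(a*) + P s♯(a*) = −λ s♯(a*) + μ⟨a*,1⟩1 for all a* ∈ A*. Write s = Σᵢ aᵢ⊗bᵢ and set r₁ := Σᵢ P(aᵢ)⊗bᵢ. Then r₁ satisfies the μ-nonhomogeneous associative Yang-Baxter equation and its extended symmetrizer r₁ + σ(r₁) − μ(1⊗1) = −λs is invariant. -/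
open TensorProduct

/-!
Since `r ↦ r♯` is injective for finite-dimensional `A`, the compatibility condition says exactly
that `(P ⊗ id) s + (id ⊗ P) s + λ s = μ (1 ⊗ 1)`; as `σ ((P ⊗ id) s) = (id ⊗ P) s` for symmetric
`s`, this is the claim about the symmetrizer.

For the Yang–Baxter equation write `s = ∑ aᵢ ⊗ bᵢ` and expand
`r₁₂ r₁₃ = ∑ P(aᵢ) P(aⱼ) ⊗ bᵢ ⊗ bⱼ` by the Rota–Baxter identity. Moving the factor in the first
leg across one of the two sums by invariance (`a x ⊗ b = a ⊗ x b`, and, with symmetry,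
`x a ⊗ b = a ⊗ b x`), the term `P(aᵢ P(aⱼ))` becomes `r₂₃ r₁₂`, the term `λ P(aᵢ aⱼ)` becomes
`λ ∑ P(aᵢ) ⊗ aⱼ ⊗ bᵢ bⱼ`, and the term `P(P(aᵢ) aⱼ)`, after the identity above is applied to the
inner sum, becomes `μ r₁₃` minus that `λ`-term minus `r₁₃ r₂₃`.
-/

open LinearMap

section Sharp

variable {k A : Type*} [Field k] [Ring A] [Algebra k A]

lemma rsharp_add (r r' : A ⊗[k] A) (f : Module.Dual k A) :
    rsharp k A (r + r') f = rsharp k A r f + rsharp k A r' f := by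
  simp [rsharp]

lemma rsharp_smul (c : k) (r : A ⊗[k] A) (f : Module.Dual k A) :
    rsharp k A (c • r) f = c • rsharp k A r f := by
  simp [rsharp]

lemma rsharp_tmul (a b : A) (f : Module.Dual k A) :
    rsharp k A (a ⊗ₜ[k] b) f = f a • b := by
  simp [rsharp]

lemma rsharp_rTensor (P : A →ₗ[k] A) (r : A ⊗[k] A) (f : Module.Dual k A) :
    rsharp k A (rTensor A P r) f = rsharp k A r (P.dualMap f) := by
  induction r using TensorProduct.induction_on with
  | zero => simp [rsharp]
  | tmul a b => simp [rsharp]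
  | add x y hx hy => simp_all [rsharp_add]

lemma rsharp_lTensor (P : A →ₗ[k] A) (r : A ⊗[k] A) (f : Module.Dual k A) :
    rsharp k A (lTensor A P r) f = P (rsharp k A r f) := by
  induction r using TensorProduct.induction_on with
  | zero => simp [rsharp]
  | tmul a b => simp [rsharp]
  | add x y hx hy => simp_all [rsharp_add]

lemma eq_of_forall_rsharp_eq [FiniteDimensional k A] {r r' : A ⊗[k] A}
    (h : ∀ f, rsharp k A r f = rsharp k A r' f) : r = r' := by
  let b := Module.finBasis k A
  have hcoord : ∀ t : A ⊗[k] A, ∀ i,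
      TensorProduct.equivFinsuppOfBasisLeft b t i = rsharp k A t (b.coord i) := by
    intro t i
    induction t using TensorProduct.induction_on with
    | zero => simp [rsharp]
    | tmul a c => simp [rsharp_tmul]
    | add x y hx hy => simp_all [rsharp_add]
  apply (TensorProduct.equivFinsuppOfBasisLeft b).injective
  ext i
  rw [hcoord, hcoord, h]

lemma rTensor_add_lTensor_add_smul_of_rsharp [FiniteDimensional k A] {lam μ : k}
    {s : A ⊗[k] A} {P : A →ₗ[k] A}
    (hcomp : ∀ f : Module.Dual k A, rsharp k A s (P.dualMap f) + P (rsharp k A s f)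
      = -lam • rsharp k A s f + (μ * f 1) • (1 : A)) :
    rTensor A P s + lTensor A P s + lam • s = μ • ((1 : A) ⊗ₜ[k] (1 : A)) := by
  refine eq_of_forall_rsharp_eq fun f => ?_
  rw [rsharp_add, rsharp_add, rsharp_smul, rsharp_smul, rsharp_rTensor, rsharp_lTensor,
    rsharp_tmul]
  linear_combination (norm := module) hcomp f

end Sharp

section LegNotation

variable {k A ι : Type*} [Field k] [Ring A] [Algebra k A] {S : Finset ι} {x y : ι → A}

lemma t12_mul_t13_of_eq_sum {r : A ⊗[k] A} (hr : r = ∑ i ∈ S, x i ⊗ₜ[k] y i) :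
    t12 k A r * t13 k A r = ∑ i ∈ S, ∑ j ∈ S, (x i * x j) ⊗ₜ[k] (y i ⊗ₜ[k] y j) := by
  simp [t12, t13, hr, Finset.sum_mul_sum, Algebra.TensorProduct.tmul_mul_tmul]

lemma t13_mul_t23_of_eq_sum {r : A ⊗[k] A} (hr : r = ∑ i ∈ S, x i ⊗ₜ[k] y i) :
    t13 k A r * t23 k A r = ∑ i ∈ S, ∑ j ∈ S, x i ⊗ₜ[k] (x j ⊗ₜ[k] (y i * y j)) := by
  simp [t13, t23, hr, Finset.sum_mul_sum, Algebra.TensorProduct.tmul_mul_tmul, tmul_sum]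

lemma t23_mul_t12_of_eq_sum {r : A ⊗[k] A} (hr : r = ∑ i ∈ S, x i ⊗ₜ[k] y i) :
    t23 k A r * t12 k A r = ∑ i ∈ S, ∑ j ∈ S, x j ⊗ₜ[k] ((x i * y j) ⊗ₜ[k] y i) := by
  simp [t12, t23, hr, Finset.sum_mul_sum, Algebra.TensorProduct.tmul_mul_tmul, tmul_sum]

lemma t13_of_eq_sum {r : A ⊗[k] A} (hr : r = ∑ i ∈ S, x i ⊗ₜ[k] y i) :
    t13 k A r = ∑ i ∈ S, x i ⊗ₜ[k] ((1 : A) ⊗ₜ[k] y i) := by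
  simp [t13, hr]

end LegNotation

section InvariantTensor

variable {k A V : Type*} [Field k] [Ring A] [Algebra k A] [AddCommGroup V] [Module k V]
  {s : A ⊗[k] A} {S : Finset (A × A)}

lemma rTensor_mulLeft_eq_lTensor_mulRight (hsym : TensorProduct.comm k A A s = s)
    (hinv : tinv k A s) (x : A) :
    rTensor A (mulLeft k x) s = lTensor A (mulRight k x) s := by
  have h := sub_eq_zero.mp (hinv x)
  rw [← hsym, lTensor_comm, rTensor_comm] at h
  exact (TensorProduct.comm k A A).injective h

lemma sum_apply_mul_tmul_eq_sum_apply_tmul_mul (hinv : tinv k A s)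
    (hs : s = ∑ p ∈ S, p.1 ⊗ₜ[k] p.2) (F : A ⊗[k] A →ₗ[k] V) (x : A) :
    ∑ p ∈ S, F ((p.1 * x) ⊗ₜ p.2) = ∑ p ∈ S, F (p.1 ⊗ₜ (x * p.2)) := by
  simpa [hs] using congrArg F (sub_eq_zero.mp (hinv x)).symm

lemma sum_apply_mul_tmul_eq_sum_apply_tmul_mul' (hsym : TensorProduct.comm k A A s = s)
    (hinv : tinv k A s) (hs : s = ∑ p ∈ S, p.1 ⊗ₜ[k] p.2) (F : A ⊗[k] A →ₗ[k] V) (x : A) :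
    ∑ p ∈ S, F ((x * p.1) ⊗ₜ p.2) = ∑ p ∈ S, F (p.1 ⊗ₜ (p.2 * x)) := by
  simpa [hs] using congrArg F (rTensor_mulLeft_eq_lTensor_mulRight hsym hinv x)

lemma sum_apply_tmul_swap (hsym : TensorProduct.comm k A A s = s)
    (hs : s = ∑ p ∈ S, p.1 ⊗ₜ[k] p.2) (F : A ⊗[k] A →ₗ[k] V) :
    ∑ p ∈ S, F (p.2 ⊗ₜ p.1) = ∑ p ∈ S, F (p.1 ⊗ₜ p.2) := by
  simpa [hs] using congrArg F hsym

lemma sum_apply_tmul_apply_eq (lam μ : k) (P : A →ₗ[k] A)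
    (hT : rTensor A P s + lTensor A P s + lam • s = μ • ((1 : A) ⊗ₜ[k] (1 : A)))
    (hs : s = ∑ p ∈ S, p.1 ⊗ₜ[k] p.2) (F : A ⊗[k] A →ₗ[k] V) :
    ∑ p ∈ S, F (p.1 ⊗ₜ P p.2) = μ • F (1 ⊗ₜ 1) - lam • ∑ p ∈ S, F (p.1 ⊗ₜ p.2)
      - ∑ p ∈ S, F (P p.1 ⊗ₜ p.2) := by
  have h := congrArg F hT
  simp only [hs, map_add, map_smul, map_sum, rTensor_tmul, lTensor_tmul] at h
  linear_combination (norm := module) h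

lemma tinv_smul (hinv : tinv k A s) (c : k) : tinv k A (c • s) := by
  intro x
  rw [map_smul, map_smul, ← smul_sub, hinv x, smul_zero]

end InvariantTensor

section YangBaxter

variable {k A : Type*} [Field k] [Ring A] [Algebra k A] {s : A ⊗[k] A} {S : Finset (A × A)}

lemma sum_sum_apply_mul_apply_tmul_eq (hinv : tinv k A s) (hs : s = ∑ p ∈ S, p.1 ⊗ₜ[k] p.2)
    (P : A →ₗ[k] A) :
    ∑ p ∈ S, ∑ q ∈ S, P (p.1 * P q.1) ⊗ₜ[k] (p.2 ⊗ₜ[k] q.2)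
      = ∑ p ∈ S, ∑ q ∈ S, P q.1 ⊗ₜ[k] ((P p.1 * q.2) ⊗ₜ[k] p.2) := by
  rw [Finset.sum_comm]
  refine Finset.sum_congr rfl fun q _ => ?_
  simpa using sum_apply_mul_tmul_eq_sum_apply_tmul_mul hinv hs
    (TensorProduct.map P ((TensorProduct.mk k A A).flip q.2)) (P q.1)

lemma sum_sum_apply_mul_tmul_eq (hsym : TensorProduct.comm k A A s = s) (hinv : tinv k A s)
    (hs : s = ∑ p ∈ S, p.1 ⊗ₜ[k] p.2) (P : A →ₗ[k] A) :
    ∑ p ∈ S, ∑ q ∈ S, P (p.1 * q.1) ⊗ₜ[k] (p.2 ⊗ₜ[k] q.2)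
      = ∑ p ∈ S, ∑ q ∈ S, P p.1 ⊗ₜ[k] (q.1 ⊗ₜ[k] (p.2 * q.2)) := by
  have hinner : ∀ p : A × A, ∑ q ∈ S, P (p.1 * q.1) ⊗ₜ[k] (p.2 ⊗ₜ[k] q.2)
      = ∑ q ∈ S, P q.1 ⊗ₜ[k] (p.2 ⊗ₜ[k] (q.2 * p.1)) := fun p => by
    simpa using sum_apply_mul_tmul_eq_sum_apply_tmul_mul' hsym hinv hs
      (TensorProduct.map P (TensorProduct.mk k A A p.2)) p.1
  rw [Finset.sum_congr rfl fun p _ => hinner p, Finset.sum_comm]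
  refine Finset.sum_congr rfl fun q _ => ?_
  simpa using sum_apply_tmul_swap hsym hs
    ((TensorProduct.mk k A (A ⊗[k] A) (P q.1)) ∘ₗ lTensor A (mulLeft k q.2))

lemma sum_sum_apply_apply_mul_tmul_eq (lam μ : k) (hsym : TensorProduct.comm k A A s = s)
    (hinv : tinv k A s) (hs : s = ∑ p ∈ S, p.1 ⊗ₜ[k] p.2) (P : A →ₗ[k] A)
    (hT : rTensor A P s + lTensor A P s + lam • s = μ • ((1 : A) ⊗ₜ[k] (1 : A))) :
    ∑ p ∈ S, ∑ q ∈ S, P (P p.1 * q.1) ⊗ₜ[k] (p.2 ⊗ₜ[k] q.2)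
      = μ • ∑ p ∈ S, P p.1 ⊗ₜ[k] ((1 : A) ⊗ₜ[k] p.2)
        - lam • ∑ p ∈ S, ∑ q ∈ S, P p.1 ⊗ₜ[k] (q.1 ⊗ₜ[k] (p.2 * q.2))
        - ∑ p ∈ S, ∑ q ∈ S, P p.1 ⊗ₜ[k] (P q.1 ⊗ₜ[k] (p.2 * q.2)) := by
  have hinner : ∀ p : A × A, ∑ q ∈ S, P (P p.1 * q.1) ⊗ₜ[k] (p.2 ⊗ₜ[k] q.2)
      = ∑ q ∈ S, P q.1 ⊗ₜ[k] (p.2 ⊗ₜ[k] (q.2 * P p.1)) := fun p => by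
    simpa using sum_apply_mul_tmul_eq_sum_apply_tmul_mul' hsym hinv hs
      (TensorProduct.map P (TensorProduct.mk k A A p.2)) (P p.1)
  rw [Finset.sum_congr rfl fun p _ => hinner p, Finset.sum_comm, Finset.smul_sum,
    Finset.smul_sum, ← Finset.sum_sub_distrib, ← Finset.sum_sub_distrib]
  refine Finset.sum_congr rfl fun q _ => ?_
  set F := (TensorProduct.mk k A (A ⊗[k] A) (P q.1)) ∘ₗ lTensor A (mulLeft k q.2)
  calc ∑ p ∈ S, P q.1 ⊗ₜ[k] (p.2 ⊗ₜ[k] (q.2 * P p.1))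
      = ∑ p ∈ S, F (p.1 ⊗ₜ P p.2) := by
        simpa [F] using sum_apply_tmul_swap hsym hs (F ∘ₗ lTensor A P)
    _ = _ := by
      rw [sum_apply_tmul_apply_eq lam μ P hT hs F]
      simp [F, Finset.smul_sum]

theorem nhacYBE_rTensor (lam μ : k) (hsym : TensorProduct.comm k A A s = s) (hinv : tinv k A s)
    (P : A →ₗ[k] A)
    (hRB : ∀ x y : A, P x * P y = P (P x * y) + P (x * P y) + lam • P (x * y))
    (hT : rTensor A P s + lTensor A P s + lam • s = μ • ((1 : A) ⊗ₜ[k] (1 : A))) :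
    nhacYBE k A μ (rTensor A P s) := by
  obtain ⟨S, hs⟩ := TensorProduct.exists_finset s
  have hr : rTensor A P s = ∑ p ∈ S, P p.1 ⊗ₜ[k] p.2 := by simp [hs]
  have hexpand : ∑ p ∈ S, ∑ q ∈ S, (P p.1 * P q.1) ⊗ₜ[k] (p.2 ⊗ₜ[k] q.2)
      = ∑ p ∈ S, ∑ q ∈ S, P (P p.1 * q.1) ⊗ₜ[k] (p.2 ⊗ₜ[k] q.2)
        + ∑ p ∈ S, ∑ q ∈ S, P (p.1 * P q.1) ⊗ₜ[k] (p.2 ⊗ₜ[k] q.2)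
        + lam • ∑ p ∈ S, ∑ q ∈ S, P (p.1 * q.1) ⊗ₜ[k] (p.2 ⊗ₜ[k] q.2) := by
    simp only [hRB, add_tmul, smul_tmul', Finset.sum_add_distrib, Finset.smul_sum]
  rw [nhacYBE, t12_mul_t13_of_eq_sum hr, t13_mul_t23_of_eq_sum hr, t23_mul_t12_of_eq_sum hr,
    t13_of_eq_sum hr, hexpand, sum_sum_apply_apply_mul_tmul_eq lam μ hsym hinv hs P hT,
    sum_sum_apply_mul_apply_tmul_eq hinv hs P, sum_sum_apply_mul_tmul_eq hsym hinv hs P]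
  abel

end YangBaxter

theorem stmt15 (k A : Type*) [Field k] [Ring A] [Algebra k A]
    [FiniteDimensional k A]
    (lam μ : k) (s : A ⊗[k] A)
    (hsym : TensorProduct.comm k A A s = s)
    (hinv : tinv k A s)
    (P : A →ₗ[k] A)
    (hRB : ∀ x y : A, P x * P y = P (P x * y) + P (x * P y) + lam • P (x * y))
    (hcomp : ∀ f : Module.Dual k A,
      rsharp k A s (P.dualMap f) + P (rsharp k A s f)
        = -lam • rsharp k A s f + (μ * f 1) • (1 : A)) :
    nhacYBE k A μ (LinearMap.rTensor A P s) ∧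
    LinearMap.rTensor A P s
        + TensorProduct.comm k A A (LinearMap.rTensor A P s)
        - μ • ((1 : A) ⊗ₜ[k] (1 : A)) = -lam • s ∧
    tinv k A (-lam • s) := by
  have hT := rTensor_add_lTensor_add_smul_of_rsharp hcomp
  refine ⟨nhacYBE_rTensor lam μ hsym hinv P hRB hT, ?_, tinv_smul hinv (-lam)⟩
  rw [← lTensor_comm, hsym]
  linear_combination (norm := module) hT
end
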